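/- arXiv:2103.13365 — 4 statements merged into one kernel-verified Lean document; each statement's English description precedes it below -/
import Mathlib

section
/- Let h ∈ 𝒪_M(ℝ) (slowly increasing smooth function). If the multiplication operator M_h : 𝒮(ℝ) → 𝒮(ℝ), f ↦ hf, is surjective, then 0 is not in the range of h and 1/h is slowly increasing. -/
open scoped ContDiff SchwartzMap Nat
open Metric Filter Function

noncomputable def bC : ContDiffBump (0:ℝ) := ⟨1, 2, one_pos, one_lt_two⟩

noncomputable def phiC : ℝ → ℂ := fun y => (bC y : ℂ)

lemma phiC_smooth : ContDiff ℝ ∞ phiC :=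
  Complex.ofRealCLM.contDiff.comp bC.contDiff

lemma phiC_zero {y : ℝ} (hy : 2 ≤ |y|) : phiC y = 0 := by
  simp only [phiC, Complex.ofReal_eq_zero]
  exact bC.zero_of_le_dist (by simpa [Real.dist_eq, bC] using hy)

lemma phiC_at0 : phiC 0 = 1 := by
  simp only [phiC]
  rw [bC.one_of_mem_closedBall (by simp [bC])]
  norm_num

lemma phiC_cs : HasCompactSupport phiC := by
  apply HasCompactSupport.intro (isCompact_closedBall (0:ℝ) 2)
  intro y hy
  exact phiC_zero (le_of_lt (by simpa [Real.dist_eq] using hy))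

/-- Construct a Schwartz function from a smooth compactly supported function. -/
noncomputable def toSchwartzCS (f : ℝ → ℂ) (hf : ContDiff ℝ ∞ f)
    (hs : HasCompactSupport f) : 𝓢(ℝ, ℂ) where
  toFun := f
  smooth' := hf
  decay' := by
    intro k n
    have hq : Continuous fun x : ℝ => ‖x‖ ^ k * ‖iteratedFDeriv ℝ n f x‖ :=
      (continuous_norm.pow k).mul (hf.continuous_iteratedFDeriv (by exact_mod_cast le_top)).norm
    have hqs : HasCompactSupport fun x : ℝ => ‖x‖ ^ k * ‖iteratedFDeriv ℝ n f x‖ := by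
      apply HasCompactSupport.intro hs
      intro x hx
      have : iteratedFDeriv ℝ n f x = 0 := by
        by_contra hne
        exact hx (support_iteratedFDeriv_subset n hne)
      simp [this]
    obtain ⟨C, hC⟩ := hq.bounded_above_of_compact_support hqs
    exact ⟨C, fun x => (le_abs_self _).trans (hC x)⟩
lemma iteratedDeriv_inv_complex (i : ℕ) : ∀ z : ℂ, z ≠ 0 →
    iteratedDeriv i (fun w : ℂ => w⁻¹) z = ((-1)^i * i !) * z ^ (-(i+1) : ℤ) := by
  induction i with
  | zero =>
    intro z hz
    simp [iteratedDeriv_zero, zpow_neg]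
  | succ i IH =>
    intro z hz
    rw [iteratedDeriv_succ]
    have hev : iteratedDeriv i (fun w : ℂ => w⁻¹)
        =ᶠ[nhds z] fun w => (((-1:ℂ))^i * i !) * w ^ (-(i+1) : ℤ) := by
      filter_upwards [isOpen_compl_singleton.mem_nhds
        (show z ∈ ({0}ᶜ : Set ℂ) by simpa using hz)] with w hw
      exact IH w (by simpa using hw)
    rw [hev.deriv_eq]
    rw [deriv_const_mul _ (differentiableAt_zpow.mpr (Or.inl hz))]
    rw [deriv_zpow]
    have hexp : (-((i:ℤ)+1)) - 1 = -(((i+1:ℕ) : ℤ) + 1) := by push_cast; ring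
    rw [hexp]
    simp only [Nat.factorial_succ]
    push_cast
    ring
lemma norm_iteratedFDerivWithin_inv_eq (i : ℕ) (z : ℂ) (hz : z ≠ 0) :
    ‖iteratedFDerivWithin ℝ i (fun w : ℂ => w⁻¹) {0}ᶜ z‖ = i ! * (‖z‖⁻¹) ^ (i+1) := by
  have hsopen : IsOpen ({0}ᶜ : Set ℂ) := isOpen_compl_singleton
  have hz' : z ∈ ({0}ᶜ : Set ℂ) := by simpa using hz
  have hco : ContDiffOn ℂ ∞ (fun w : ℂ => w⁻¹) {0}ᶜ := contDiffOn_inv ℂ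
  have htay : HasFTaylorSeriesUpToOn ∞ (fun w : ℂ => w⁻¹)
      (ftaylorSeriesWithin ℂ (fun w : ℂ => w⁻¹) {0}ᶜ) {0}ᶜ :=
    hco.ftaylorSeriesWithin hsopen.uniqueDiffOn
  have htayR := htay.restrictScalars ℝ
  have heq := htayR.eq_iteratedFDerivWithin_of_uniqueDiffOn (m := i) (by exact_mod_cast le_top)
    hsopen.uniqueDiffOn hz'
  rw [← heq]
  have h1 : FormalMultilinearSeries.restrictScalars ℝ
      (ftaylorSeriesWithin ℂ (fun w : ℂ => w⁻¹) {0}ᶜ z) i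
      = ContinuousMultilinearMap.restrictScalars ℝ
        (ftaylorSeriesWithin ℂ (fun w : ℂ => w⁻¹) {0}ᶜ z i) := rfl
  rw [h1, ContinuousMultilinearMap.norm_restrictScalars]
  have h2 : ftaylorSeriesWithin ℂ (fun w : ℂ => w⁻¹) {0}ᶜ z i
      = iteratedFDerivWithin ℂ i (fun w : ℂ => w⁻¹) {0}ᶜ z := rfl
  rw [h2, iteratedFDerivWithin_of_isOpen i hsopen hz',
    norm_iteratedFDeriv_eq_norm_iteratedDeriv, iteratedDeriv_inv_complex i z hz]
  rw [norm_mul, norm_mul, norm_pow, norm_neg, norm_one, one_pow, one_mul]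
  rw [show (-((i:ℤ)+1)) = -(((i+1 : ℕ) : ℤ)) by push_cast; ring, zpow_neg, zpow_natCast,
    norm_inv, norm_pow, inv_pow]
  simp
lemma lower_bd (h : ℝ → ℂ) (hc : Continuous h) (h0 : ∀ x, h x ≠ 0)
    (hsurj : ∀ g : 𝓢(ℝ, ℂ), ∃ f : 𝓢(ℝ, ℂ), ∀ x : ℝ, h x * f x = g x) :
    ∃ (n : ℕ) (c : ℝ), 0 < c ∧ ∀ x : ℝ, c ≤ ‖h x‖ * (1 + x^2)^n := by
  by_contra H
  push_neg at H
  have key : ∀ (k : ℕ) (R : ℝ), ∃ x : ℝ, R < |x| ∧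
      ((k:ℝ)+1) * ‖h x‖ * (1 + x^2)^k < (2:ℝ)⁻¹^k := by
    intro k R
    obtain ⟨x₀, hx₀I, hx₀min⟩ := isCompact_Icc.exists_isMinOn
      (Set.nonempty_Icc.mpr (by linarith [abs_nonneg R] : -(|R|+1) ≤ |R|+1))
      hc.norm.continuousOn
    have hδ : 0 < ‖h x₀‖ := norm_pos_iff.mpr (h0 x₀)
    have hεpos : 0 < min ‖h x₀‖ ((2:ℝ)⁻¹^k / ((k:ℝ)+1)) := by positivity
    obtain ⟨x, hx⟩ := H k _ hεpos
    have hone : (1:ℝ) ≤ (1 + x^2)^k :=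
      one_le_pow₀ (by nlinarith [sq_nonneg x])
    have hlt : ‖h x‖ < min ‖h x₀‖ ((2:ℝ)⁻¹^k / ((k:ℝ)+1)) :=
      lt_of_le_of_lt (le_mul_of_one_le_right (norm_nonneg _) hone) hx
    refine ⟨x, ?_, ?_⟩
    · by_contra hR
      push_neg at hR
      obtain ⟨h1, h2⟩ := abs_le.mp hR
      have hxI : x ∈ Set.Icc (-(|R|+1)) (|R|+1) := by
        constructor <;> nlinarith [le_abs_self R, neg_abs_le R]
      have hmin := isMinOn_iff.mp hx₀min x hxI
      have h3 := lt_of_lt_of_le hlt (min_le_left _ _)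
      linarith
    · have h3 : ‖h x‖ * (1+x^2)^k < (2:ℝ)⁻¹^k / ((k:ℝ)+1) :=
        lt_of_lt_of_le hx (min_le_right _ _)
      have hk1 : (0:ℝ) < (k:ℝ)+1 := by positivity
      calc ((k:ℝ)+1) * ‖h x‖ * (1+x^2)^k = ((k:ℝ)+1) * (‖h x‖ * (1+x^2)^k) := by ring
        _ < ((k:ℝ)+1) * ((2:ℝ)⁻¹^k / ((k:ℝ)+1)) := (mul_lt_mul_iff_right₀ hk1).mpr h3
        _ = (2:ℝ)⁻¹^k := by field_simp
  choose X hX1 hX2 using key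
  set u : ℕ → ℝ := fun k => Nat.rec (X 0 0) (fun k xk => X (k+1) (|xk|+5)) k with hu
  have hustep : ∀ k, u (k+1) = X (k+1) (|u k| + 5) := fun k => rfl
  have hsep1 : ∀ k, |u k| + 5 < |u (k+1)| := fun k => by
    rw [hustep]; exact hX1 (k+1) (|u k| + 5)
  have hmono : ∀ j k, j < k → |u j| + 5 ≤ |u k| := by
    intro j k hjk
    induction k with
    | zero => omega
    | succ k IH =>
      rcases Nat.lt_succ_iff_lt_or_eq.mp hjk with hlt | heq
      · have := IH hlt; linarith [hsep1 k]
      · subst heq; exact (hsep1 j).le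
  have hbound : ∀ k : ℕ, ((k:ℝ)+1) * ‖h (u k)‖ * (1+(u k)^2)^k < (2:ℝ)⁻¹^k := by
    intro k
    cases k with
    | zero => exact hX2 0 0
    | succ k => rw [hustep k]; exact hX2 (k+1) (|u k|+5)
  -- bounds on derivatives of the bump
  have Mb : ∀ n : ℕ, ∃ Mn : ℝ, 0 ≤ Mn ∧ ∀ y : ℝ, ‖iteratedFDeriv ℝ n phiC y‖ ≤ Mn := by
    intro n
    have hcs' : HasCompactSupport (iteratedFDeriv ℝ n phiC) :=
      IsCompact.of_isClosed_subset phiC_cs (isClosed_tsupport _)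
        (tsupport_iteratedFDeriv_subset n)
    obtain ⟨C, hC⟩ := (phiC_smooth.continuous_iteratedFDeriv
      (by exact_mod_cast le_top)).bounded_above_of_compact_support hcs'
    exact ⟨max C 0, le_max_right _ _, fun y => (hC y).trans (le_max_left _ _)⟩
  choose M hM0 hM using Mb
  set c : ℕ → ℝ := fun k => ((k:ℝ)+1) * ‖h (u k)‖ with hcdef
  have cpos : ∀ k, 0 < c k := fun k => by
    have := norm_pos_iff.mpr (h0 (u k)); positivity
  have hck : ∀ k K : ℕ, K ≤ k → c k * (1+(u k)^2)^K < (2:ℝ)⁻¹^k := by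
    intro k K hK
    have h1 : (1:ℝ) ≤ 1 + (u k)^2 := by nlinarith [sq_nonneg (u k)]
    calc c k * (1+(u k)^2)^K ≤ c k * (1+(u k)^2)^k :=
          mul_le_mul_of_nonneg_left (pow_le_pow_right₀ h1 hK) (cpos k).le
      _ < (2:ℝ)⁻¹^k := by rw [hcdef]; simpa [mul_assoc] using hbound k
  have Ssum : ∀ K : ℕ, Summable (fun k : ℕ => c k * (1+(u k)^2)^K) := by
    intro K
    apply Summable.of_norm_bounded_eventually_nat (g := fun k : ℕ => (2:ℝ)⁻¹^k)
      (summable_geometric_of_lt_one (by norm_num) (by norm_num))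
    filter_upwards [eventually_ge_atTop K] with k hk
    rw [Real.norm_eq_abs, abs_of_nonneg (mul_nonneg (cpos k).le (by positivity))]
    exact (hck k K hk).le
  set fk : ℕ → ℝ → ℂ := fun k y => c k • phiC (y + -(u k)) with hfkdef
  have fsm : ∀ k, ContDiff ℝ ∞ (fk k) := fun k =>
    ((phiC_smooth.comp (contDiff_id.add contDiff_const))).const_smul (c k)
  have fbound : ∀ (n k : ℕ) (y : ℝ), ‖iteratedFDeriv ℝ n (fk k) y‖ ≤ c k * M n := by
    intro n k y
    have hsm : ContDiff ℝ n fun z : ℝ => phiC (z + -(u k)) :=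
      (phiC_smooth.comp (contDiff_id.add contDiff_const)).of_le (by exact_mod_cast le_top)
    have h1 : iteratedFDeriv ℝ n (fk k) y
        = c k • iteratedFDeriv ℝ n (fun z : ℝ => phiC (z + -(u k))) y :=
      iteratedFDeriv_const_smul_apply' hsm.contDiffAt
    rw [h1, norm_smul (c k) (iteratedFDeriv ℝ n (fun z : ℝ => phiC (z + -(u k))) y)]
    have h3 : ‖iteratedFDeriv ℝ n (fun z : ℝ => phiC (z + -(u k))) y‖ ≤ M n := by
      rw [norm_iteratedFDeriv_eq_norm_iteratedDeriv,
        iteratedDeriv_comp_add_const n phiC (-(u k)),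
        ← norm_iteratedFDeriv_eq_norm_iteratedDeriv]
      exact hM n (y + -(u k))
    have h2 : ‖c k‖ = c k := abs_of_pos (cpos k)
    rw [h2]
    exact mul_le_mul_of_nonneg_left h3 (cpos k).le
  have fsupp : ∀ (n k : ℕ) (y : ℝ), 2 < |y - u k| → iteratedFDeriv ℝ n (fk k) y = 0 := by
    intro n k y hy
    by_contra hne
    have hmem : y ∈ tsupport (fk k) :=
      support_iteratedFDeriv_subset n (Function.mem_support.mpr hne)
    have hts : tsupport (fk k) ⊆ Metric.closedBall (u k) 2 := by
      apply closure_minimal ?_ Metric.isClosed_closedBall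
      intro z hz
      rw [Function.mem_support] at hz
      rw [Metric.mem_closedBall, Real.dist_eq]
      by_contra hz2
      push_neg at hz2
      apply hz
      rw [hfkdef]
      have : phiC (z + -(u k)) = 0 := phiC_zero (by
        rw [show z + -(u k) = z - u k by ring]; linarith)
      simp [this]
    have := hts hmem
    rw [Metric.mem_closedBall, Real.dist_eq] at this
    linarith
  set g : ℝ → ℂ := fun y => ∑' k, fk k y with hgdef
  have hv : ∀ n : ℕ, Summable (fun k => c k * M n) := by
    intro n
    have := (Ssum 0).mul_right (M n)
    simpa using this
  have gsmooth : ContDiff ℝ ∞ g :=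
    contDiff_tsum fsm (fun n _ => hv n) (fun n k y _ => fbound n k y)
  have gderiv : ∀ (n : ℕ) (y : ℝ),
      iteratedFDeriv ℝ n g y = ∑' k, iteratedFDeriv ℝ n (fk k) y := fun n y =>
    iteratedFDeriv_tsum_apply fsm (fun n _ => hv n) (fun n k y _ => fbound n k y)
      le_top y
  have gdecay : ∀ K n : ℕ, ∃ C : ℝ, ∀ y : ℝ, ‖y‖^K * ‖iteratedFDeriv ℝ n g y‖ ≤ C := by
    intro K n
    refine ⟨3^K * M n * (∑' k, c k * (1+(u k)^2)^K), fun y => ?_⟩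
    rw [gderiv n y]
    have hterm : ∀ k, ‖y‖^K * ‖iteratedFDeriv ℝ n (fk k) y‖
        ≤ 3^K * M n * (c k * (1+(u k)^2)^K) := by
      intro k
      rcases le_or_gt (|y - u k|) 2 with hle | hlt
      · have habs : |y| - |u k| ≤ |y - u k| := abs_sub_abs_le_abs_sub y (u k)
        have hy3 : ‖y‖ ≤ 3 * (1+(u k)^2) := by
          rw [Real.norm_eq_abs]
          nlinarith [abs_nonneg (u k), sq_abs (u k), sq_nonneg (|u k| - 1)]
        calc ‖y‖^K * ‖iteratedFDeriv ℝ n (fk k) y‖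
            ≤ (3 * (1+(u k)^2))^K * (c k * M n) :=
              mul_le_mul (pow_le_pow_left₀ (norm_nonneg _) hy3 K) (fbound n k y)
                (norm_nonneg _) (by positivity)
          _ = 3^K * M n * (c k * (1+(u k)^2)^K) := by rw [mul_pow]; ring
      · rw [fsupp n k y hlt, norm_zero, mul_zero]
        have := (cpos k).le
        have := hM0 n
        positivity
    have hsumN : Summable fun k => ‖iteratedFDeriv ℝ n (fk k) y‖ :=
      Summable.of_nonneg_of_le (fun k => norm_nonneg _) (fun k => fbound n k y) (hv n)
    have hsum2 : Summable fun k => ‖y‖^K * ‖iteratedFDeriv ℝ n (fk k) y‖ :=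
      (hsumN.mul_left _)
    calc ‖y‖^K * ‖∑' k, iteratedFDeriv ℝ n (fk k) y‖
        ≤ ‖y‖^K * ∑' k, ‖iteratedFDeriv ℝ n (fk k) y‖ :=
          mul_le_mul_of_nonneg_left (norm_tsum_le_tsum_norm hsumN) (by positivity)
      _ = ∑' k, ‖y‖^K * ‖iteratedFDeriv ℝ n (fk k) y‖ := tsum_mul_left.symm
      _ ≤ ∑' k, 3^K * M n * (c k * (1+(u k)^2)^K) :=
          hsum2.tsum_le_tsum hterm ((Ssum K).mul_left _)
      _ = 3^K * M n * ∑' k, c k * (1+(u k)^2)^K := tsum_mul_left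
  set G : 𝓢(ℝ, ℂ) := ⟨g, gsmooth, gdecay⟩ with hGdef
  have gval : ∀ j : ℕ, g (u j) = (c j : ℂ) := by
    intro j
    have hzero : ∀ k, k ≠ j → fk k (u j) = 0 := by
      intro k hkj
      have hsep : (5:ℝ) ≤ |u j - u k| := by
        rcases lt_or_gt_of_ne hkj with hlt | hgt
        · have := hmono k j hlt
          have habs : |u j| - |u k| ≤ |u j - u k| := abs_sub_abs_le_abs_sub _ _
          linarith
        · have := hmono j k hgt
          have habs : |u k| - |u j| ≤ |u k - u j| := abs_sub_abs_le_abs_sub _ _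
          rw [abs_sub_comm] at habs
          linarith
      rw [hfkdef]
      have : phiC (u j + -(u k)) = 0 := phiC_zero (by
        rw [show u j + -(u k) = u j - u k by ring]; linarith)
      simp [this]
    have hgg : g (u j) = ∑' k, fk k (u j) := rfl
    rw [hgg, tsum_eq_single j hzero]
    rw [hfkdef]
    simp only [add_neg_cancel, phiC_at0, smul_eq_mul]
    simp [Complex.real_smul]
  obtain ⟨f, hf⟩ := hsurj G
  obtain ⟨Cf, hCf0, hCf⟩ := f.decay 0 0
  have hle : ∀ k : ℕ, (k:ℝ)+1 ≤ Cf := by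
    intro k
    have h1 : h (u k) * f (u k) = (c k : ℂ) := by rw [hf (u k)]; exact gval k
    have h2 : ‖h (u k)‖ * ‖f (u k)‖ = c k := by
      rw [← norm_mul, h1, Complex.norm_real, Real.norm_eq_abs, abs_of_pos (cpos k)]
    have hner : ‖h (u k)‖ ≠ 0 := norm_ne_zero_iff.mpr (h0 (u k))
    have h3 : ‖f (u k)‖ = (k:ℝ)+1 := by
      have : ‖h (u k)‖ * ‖f (u k)‖ = ‖h (u k)‖ * ((k:ℝ)+1) := by
        rw [h2, hcdef]; ring
      exact mul_left_cancel₀ hner this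
    have h4 : ‖f (u k)‖ ≤ Cf := by
      have := hCf (u k)
      simpa [norm_iteratedFDeriv_zero] using this
    linarith
  obtain ⟨k, hk⟩ := exists_nat_gt Cf
  have := hle k
  have : (k:ℝ) ≤ Cf := by linarith
  linarith

def SlowlyIncreasing (f : ℝ → ℂ) : Prop :=
  ContDiff ℝ (⊤ : ℕ∞) f ∧ ∀ m : ℕ, ∃ C > (0 : ℝ), ∃ n : ℕ, ∀ x : ℝ, ∀ i ≤ m,
    ‖iteratedDeriv i f x‖ ≤ C * (1 + x ^ 2) ^ n

theorem stmt_3 (h : ℝ → ℂ) (hh : SlowlyIncreasing h)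
    (hsurj : ∀ g : SchwartzMap ℝ ℂ, ∃ f : SchwartzMap ℝ ℂ, ∀ x : ℝ, h x * f x = g x) :
    (∀ x : ℝ, h x ≠ 0) ∧ SlowlyIncreasing (fun x => (h x)⁻¹) := by
  have h0 : ∀ x : ℝ, h x ≠ 0 := by
    intro x₀
    have hcs : HasCompactSupport (fun y : ℝ => phiC (y + -x₀)) := by
      apply HasCompactSupport.intro (isCompact_closedBall x₀ 2)
      intro y hy
      apply phiC_zero
      rw [show y + -x₀ = y - x₀ by ring]
      rw [Metric.mem_closedBall, Real.dist_eq, not_le] at hy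
      exact hy.le
    obtain ⟨f, hf⟩ := hsurj (toSchwartzCS _
      (phiC_smooth.comp (contDiff_id.add contDiff_const)) hcs)
    have h1 : h x₀ * f x₀ = 1 := by
      rw [hf x₀]
      show phiC (x₀ + -x₀) = 1
      rw [add_neg_cancel, phiC_at0]
    exact left_ne_zero_of_mul_eq_one h1
  refine ⟨h0, hh.1.inv h0, ?_⟩
  intro m
  obtain ⟨n₀, c₀, hc₀, hlow⟩ := lower_bd h hh.1.continuous h0 hsurj
  obtain ⟨C₀, hC₀pos, n₁, hhb⟩ := hh.2 m
  set c' : ℝ := max 1 c₀⁻¹ with hc'def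
  have hc'1 : (1:ℝ) ≤ c' := le_max_left _ _
  refine ⟨(m ! : ℝ) * m ! * c'^(m+1) * (max 1 C₀)^m, by positivity,
    n₀*(m+1) + n₁*m, ?_⟩
  intro x i him
  have hhx : 0 < ‖h x‖ := norm_pos_iff.mpr (h0 x)
  have hpow : (0:ℝ) < (1+x^2)^n₀ := by positivity
  have honele : (1:ℝ) ≤ 1 + x^2 := by nlinarith [sq_nonneg x]
  have hBx : ‖h x‖⁻¹ ≤ c' * (1+x^2)^n₀ := by
    have hlx := hlow x
    have hstep : ‖h x‖⁻¹ ≤ c₀⁻¹ * (1+x^2)^n₀ := by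
      rw [inv_le_iff_one_le_mul₀ hhx]
      calc (1:ℝ) = c₀⁻¹ * c₀ := (inv_mul_cancel₀ (ne_of_gt hc₀)).symm
        _ ≤ c₀⁻¹ * (‖h x‖ * (1+x^2)^n₀) := by
            apply mul_le_mul_of_nonneg_left hlx (by positivity)
        _ = c₀⁻¹ * (1+x^2)^n₀ * ‖h x‖ := by ring
    exact hstep.trans (by gcongr; exact le_max_right _ _)
  set B : ℝ := c' * (1+x^2)^n₀ with hBdef
  have hB1 : (1:ℝ) ≤ B := by
    calc (1:ℝ) = 1*1 := (mul_one 1).symm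
      _ ≤ c' * (1+x^2)^n₀ := mul_le_mul hc'1 (one_le_pow₀ honele) one_pos.le
          (le_trans one_pos.le hc'1)
  set D : ℝ := max 1 (C₀ * (1+x^2)^n₁) with hDdef
  have hD1 : (1:ℝ) ≤ D := le_max_left _ _
  have hC : ∀ j, j ≤ i →
      ‖iteratedFDerivWithin ℝ j (fun w : ℂ => w⁻¹) {0}ᶜ (h x)‖ ≤ (m ! : ℝ) * B^(m+1) := by
    intro j hj
    rw [norm_iteratedFDerivWithin_inv_eq j (h x) (h0 x)]
    have h1 : (j ! : ℝ) ≤ (m ! : ℝ) :=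
      Nat.cast_le.mpr (Nat.factorial_le (le_trans hj him))
    have h2 : (‖h x‖⁻¹)^(j+1) ≤ B^(m+1) := by
      calc (‖h x‖⁻¹)^(j+1) ≤ B^(j+1) :=
            pow_le_pow_left₀ (by positivity) hBx (j+1)
        _ ≤ B^(m+1) := pow_le_pow_right₀ hB1 (by omega)
    exact mul_le_mul h1 h2 (by positivity) (by positivity)
  have hD : ∀ j, 1 ≤ j → j ≤ i → ‖iteratedFDerivWithin ℝ j h Set.univ x‖ ≤ D^j := by
    intro j hj1 hji
    rw [iteratedFDerivWithin_univ, norm_iteratedFDeriv_eq_norm_iteratedDeriv]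
    calc ‖iteratedDeriv j h x‖ ≤ C₀ * (1+x^2)^n₁ := hhb x j (le_trans hji him)
      _ ≤ D := le_max_right _ _
      _ ≤ D^j := le_self_pow₀ hD1 (by omega)
  have key := norm_iteratedFDerivWithin_comp_le (𝕜 := ℝ) (g := fun w : ℂ => w⁻¹)
    (f := h) (n := i) (N := ∞) (contDiffOn_inv ℝ) (hh.1.of_le (by simp)).contDiffOn
    (by exact_mod_cast le_top) isOpen_compl_singleton.uniqueDiffOn uniqueDiffOn_univ
    (fun y _ => by simpa using h0 y) (Set.mem_univ x) hC hD
  rw [iteratedFDerivWithin_univ] at key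
  have hkey2 : ‖iteratedDeriv i (fun y : ℝ => (h y)⁻¹) x‖
      ≤ (i ! : ℝ) * ((m ! : ℝ) * B^(m+1)) * D^i := by
    rw [← norm_iteratedFDeriv_eq_norm_iteratedDeriv]
    exact key
  have hfin : (i ! : ℝ) * ((m ! : ℝ) * B^(m+1)) * D^i
      ≤ (m ! : ℝ) * m ! * c'^(m+1) * (max 1 C₀)^m * (1+x^2)^(n₀*(m+1) + n₁*m) := by
    have hi : (i ! : ℝ) ≤ (m ! : ℝ) := Nat.cast_le.mpr (Nat.factorial_le him)
    have hDi : D^i ≤ ((max 1 C₀) * (1+x^2)^n₁)^m := by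
      have hDle : D ≤ (max 1 C₀) * (1+x^2)^n₁ := by
        apply max_le
        · calc (1:ℝ) = 1*1 := (mul_one 1).symm
            _ ≤ (max 1 C₀) * (1+x^2)^n₁ := mul_le_mul (le_max_left _ _)
                (one_le_pow₀ honele) one_pos.le (le_trans one_pos.le (le_max_left _ _))
        · exact mul_le_mul_of_nonneg_right (le_max_right _ _) (by positivity)
      calc D^i ≤ D^m := pow_le_pow_right₀ hD1 him
        _ ≤ ((max 1 C₀) * (1+x^2)^n₁)^m := pow_le_pow_left₀ (by positivity) hDle m
    calc (i ! : ℝ) * ((m ! : ℝ) * B^(m+1)) * D^i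
        ≤ (m ! : ℝ) * ((m ! : ℝ) * B^(m+1)) * ((max 1 C₀) * (1+x^2)^n₁)^m := by
          apply mul_le_mul (mul_le_mul_of_nonneg_right hi (by positivity)) hDi
            (by positivity) (by positivity)
      _ = (m ! : ℝ) * m ! * c'^(m+1) * (max 1 C₀)^m * (1+x^2)^(n₀*(m+1) + n₁*m) := by
          rw [hBdef, pow_add (1+x^2) (n₀*(m+1)) (n₁*m), pow_mul (1+x^2) n₀ (m+1), pow_mul (1+x^2) n₁ m, mul_pow, mul_pow]
          ring
  exact hkey2.trans hfin
end

section
/- Let h ∈ 𝒪_M(ℝ). If the sequence of powers {hⁿ}_{n∈ℕ} is bounded in 𝒪_M(ℝ) (i.e., for each m ∈ ℕ there exist C > 0 and k ∈ ℕ with sup_{0≤i≤m}|(hⁿ)^(i)(x)| ≤ C(1+x²)^k for all x ∈ ℝ and all n ∈ ℕ), then the multiplication operator M_h is power bounded on 𝒮(ℝ): for each m ∈ ℕ there exist C' > 0 and m' ∈ ℕ such that ‖hⁿ f‖_m ≤ C' ‖f‖_{m'} for all n ∈ ℕ and f ∈ 𝒮(ℝ), where ‖f‖_m = sup_x sup_{0≤i≤m}(1+x²)^m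 |f^(i)(x)|. -/
theorem stmt_11 (h : ℝ → ℂ) (hh : SlowlyIncreasing h)
    (hpow : ∀ m : ℕ, ∃ C > (0 : ℝ), ∃ k : ℕ, ∀ (n : ℕ) (x : ℝ), ∀ i ≤ m,
      ‖iteratedDeriv i (fun y : ℝ => h y ^ n) x‖ ≤ C * (1 + x ^ 2) ^ k) :
    ∀ m : ℕ, ∃ C' > (0 : ℝ), ∃ m' : ℕ, ∀ (n : ℕ) (f : SchwartzMap ℝ ℂ) (B : ℝ),
      (∀ x : ℝ, ∀ i ≤ m', (1 + x ^ 2) ^ m' * ‖iteratedDeriv i (fun y : ℝ => f y) x‖ ≤ B) →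
      ∀ x : ℝ, ∀ i ≤ m,
        (1 + x ^ 2) ^ m * ‖iteratedDeriv i (fun y : ℝ => h y ^ n * f y) x‖ ≤ C' * B := by
  intro m
  obtain ⟨C, hC, k, hk⟩ := hpow m
  refine ⟨2 ^ m * C, by positivity, m + k, ?_⟩
  intro n f B hB x i him
  have hP : (0:ℝ) < 1 + x ^ 2 := by positivity
  have hB0 : 0 ≤ B := le_trans (by positivity) (hB 0 0 (Nat.zero_le _))
  have hhn : ContDiff ℝ ((⊤:ℕ∞):WithTop ℕ∞) fun y : ℝ => h y ^ n := (hh.1.of_le (by simp)).pow n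
  have hfc : ContDiff ℝ ((⊤:ℕ∞):WithTop ℕ∞) fun y : ℝ => (f y : ℂ) := f.smooth'
  have key := norm_iteratedFDeriv_mul_le (𝕜 := ℝ) hhn hfc x (n := i) (by exact_mod_cast le_top)
  simp only [norm_iteratedFDeriv_eq_norm_iteratedDeriv] at key
  calc (1 + x ^ 2) ^ m * ‖iteratedDeriv i (fun y : ℝ => h y ^ n * f y) x‖
      ≤ (1 + x ^ 2) ^ m * ∑ j ∈ Finset.range (i + 1),
          (i.choose j : ℝ) * ‖iteratedDeriv j (fun y : ℝ => h y ^ n) x‖ *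
            ‖iteratedDeriv (i - j) (fun y : ℝ => (f y : ℂ)) x‖ :=
        mul_le_mul_of_nonneg_left key (by positivity)
    _ = ∑ j ∈ Finset.range (i + 1), (1 + x ^ 2) ^ m *
          ((i.choose j : ℝ) * ‖iteratedDeriv j (fun y : ℝ => h y ^ n) x‖ *
            ‖iteratedDeriv (i - j) (fun y : ℝ => (f y : ℂ)) x‖) := Finset.mul_sum ..
    _ ≤ ∑ j ∈ Finset.range (i + 1), (i.choose j : ℝ) * (C * B) := by
        refine Finset.sum_le_sum fun j hj => ?_
        have hji : j ≤ i := Nat.lt_succ_iff.mp (Finset.mem_range.mp hj)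
        have h1 : ‖iteratedDeriv j (fun y : ℝ => h y ^ n) x‖ ≤ C * (1 + x ^ 2) ^ k :=
          hk n x j (hji.trans him)
        have h2 : (1 + x ^ 2) ^ (m + k) *
            ‖iteratedDeriv (i - j) (fun y : ℝ => (f y : ℂ)) x‖ ≤ B :=
          hB x (i - j) (le_trans (Nat.sub_le i j) (him.trans (Nat.le_add_right m k)))
        have := mul_le_mul h1 h2 (by positivity) (by positivity)
        calc (1 + x ^ 2) ^ m *
              ((i.choose j : ℝ) * ‖iteratedDeriv j (fun y : ℝ => h y ^ n) x‖ *
                ‖iteratedDeriv (i - j) (fun y : ℝ => (f y : ℂ)) x‖)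
            = (i.choose j : ℝ) * (‖iteratedDeriv j (fun y : ℝ => h y ^ n) x‖ *
                ((1 + x ^ 2) ^ m * ‖iteratedDeriv (i - j) (fun y : ℝ => (f y : ℂ)) x‖)) := by
              ring
          _ ≤ (i.choose j : ℝ) * (C * (1 + x ^ 2) ^ k *
                ((1 + x ^ 2) ^ m * ‖iteratedDeriv (i - j) (fun y : ℝ => (f y : ℂ)) x‖)) := by
              gcongr
          _ = (i.choose j : ℝ) * (C * ((1 + x ^ 2) ^ (m + k) *
                ‖iteratedDeriv (i - j) (fun y : ℝ => (f y : ℂ)) x‖)) := by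
              rw [pow_add]; ring
          _ ≤ (i.choose j : ℝ) * (C * B) := by gcongr
    _ = (2 : ℝ) ^ i * (C * B) := by
        rw [← Finset.sum_mul, ← Nat.cast_sum, Nat.sum_range_choose]
        push_cast; ring
    _ ≤ 2 ^ m * C * B := by
        have h2i : (2:ℝ) ^ i ≤ 2 ^ m := pow_le_pow_right₀ one_le_two him
        have hCB : 0 ≤ C * B := by positivity
        nlinarith
end

section
/- Let E be a Fréchet space and T ∈ L(E) a continuous linear operator such that Tⁿ x / n → 0 for every x ∈ E. Then for every λ ∈ ℂ with |λ| > 1, the operator λI − T is bijective with continuous inverse given by the convergent Neumann series (1/λ)∑_{n≥0} Tⁿ/λⁿ; consequently the spectrum of T is contained in the closed unit disk. -/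
/-!
The terms of the Neumann series factor as `z⁻ⁿ Tⁿ x = (n z⁻ⁿ) • (n⁻¹ Tⁿ x)`. The second factor tends
to `0`, hence is bounded, while `∑ n ‖z‖⁻ⁿ < ∞` for `‖z‖ > 1`; so every continuous seminorm of the
tails is small and the series converges in the complete space `E`. Its sum inverts `z - T` by
telescoping, and the limit operator is continuous by Banach–Steinhaus, a Fréchet space being Baire,
hence barrelled.
-/

open Filter Bornology
open scoped ComplexOrder

theorem locallyConvexSpace_of_real {𝕜 E : Type*} [RCLike 𝕜] [AddCommGroup E] [Module 𝕜 E]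
    [Module ℝ E] [IsScalarTower ℝ 𝕜 E] [TopologicalSpace E] [IsTopologicalAddGroup E]
    [LocallyConvexSpace ℝ E] : LocallyConvexSpace 𝕜 E := by
  refine (locallyConvexSpace_iff_exists_convex_subset_zero 𝕜 E).2 fun U hU => ?_
  obtain ⟨S, hS, hSconv, hSU⟩ := (locallyConvexSpace_iff_exists_convex_subset_zero ℝ E).1 ‹_› U hU
  exact ⟨S, hS, convex_RCLike_iff_convex_real.2 hSconv, hSU⟩

theorem summable_smul_of_isVonNBounded_range {𝕜 E ι : Type*} [NontriviallyNormedField 𝕜]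
    [AddCommGroup E] [Module 𝕜 E] [UniformSpace E] [IsUniformAddGroup E] [CompleteSpace E]
    [PolynormableSpace 𝕜 E] {c : ι → 𝕜} (hc : Summable (‖c ·‖)) {v : ι → E}
    (hv : IsVonNBounded 𝕜 (Set.range v)) : Summable fun i => c i • v i := by
  have hp := PolynormableSpace.withSeminorms 𝕜 E
  refine summable_iff_vanishing.2 fun e he => ?_
  obtain ⟨⟨S, r⟩, hr, hSr⟩ := hp.hasBasis_zero_ball.mem_iff.1 he
  obtain ⟨M, hM, hvM⟩ := (hp.isVonNBounded_iff_finset_seminorm_bounded.1 hv) S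
  obtain ⟨s, hs⟩ := summable_iff_vanishing_norm.1 hc (r / M) (div_pos hr hM)
  refine ⟨s, fun t hts => hSr ?_⟩
  set q := S.sup fun p => p.1
  rw [Seminorm.mem_ball_zero]
  calc q (∑ i ∈ t, c i • v i) ≤ ∑ i ∈ t, ‖c i‖ * q (v i) := by
        refine (Finset.le_sum_of_subadditive q (map_zero q).le (map_add_le_add q) _ _).trans ?_
        simp only [map_smul_eq_mul, le_refl]
    _ ≤ ∑ i ∈ t, ‖c i‖ * M := by
        gcongr with i; exact (hvM _ (Set.mem_range_self i)).le
    _ < r := by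
        rw [← Finset.sum_mul, ← lt_div_iff₀ hM]
        refine lt_of_abs_lt ?_
        simpa using hs t hts

theorem summable_pow_smul_of_tendsto_inv_smul {𝕜 E : Type*} [RCLike 𝕜] [AddCommGroup E]
    [Module 𝕜 E] [UniformSpace E] [IsUniformAddGroup E] [CompleteSpace E] [ContinuousSMul 𝕜 E]
    [PolynormableSpace 𝕜 E] {r : 𝕜} (hr : ‖r‖ < 1) {y : ℕ → E}
    (hy : Tendsto (fun n : ℕ => (n : 𝕜)⁻¹ • y n) atTop (nhds 0)) :
    Summable fun n => r ^ n • y n := by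
  have hc : Summable fun n : ℕ => ‖(n : 𝕜) * r ^ n‖ := by
    simpa [norm_mul, norm_pow] using
      summable_pow_mul_geometric_of_norm_lt_one (R := ℝ) 1 (r := ‖r‖) (by simpa using hr)
  have hs := summable_smul_of_isVonNBounded_range hc (hy.isVonNBounded_range 𝕜)
  -- `rⁿ • yₙ = (n rⁿ) • (n⁻¹ • yₙ)` holds only for `n ≠ 0`, hence the shift by one.
  refine (summable_nat_add_iff 1).1 (((summable_nat_add_iff 1).2 hs).congr fun n => ?_)
  rw [smul_smul, mul_right_comm, mul_inv_cancel₀ (Nat.cast_ne_zero.2 n.succ_ne_zero), one_mul]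

section NeumannSeries

variable {𝕜 E : Type*} [Field 𝕜] [AddCommGroup E] [Module 𝕜 E] [TopologicalSpace E]
  [IsTopologicalAddGroup E] [T2Space E] {T : E →L[𝕜] E} {z : 𝕜} {x : E}

theorem tsum_pow_smul_pow_apply_of_commute {S : E →L[𝕜] E} (hST : Commute S T)
    (hs : Summable fun n => (z⁻¹) ^ n • (T ^ n) x) :
    ∑' n, (z⁻¹) ^ n • (T ^ n) (S x) = S (∑' n, (z⁻¹) ^ n • (T ^ n) x) := by
  rw [S.map_tsum hs]
  congr 1 with n
  rw [map_smul, ← mul_apply_eq_comp, ← mul_apply_eq_comp, (hST.pow_right n).eq]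

variable [ContinuousConstSMul 𝕜 E]

theorem sub_apply_smul_tsum_pow_smul_pow_apply (hz : z ≠ 0)
    (hs : Summable fun n => (z⁻¹) ^ n • (T ^ n) x) :
    (z • ContinuousLinearMap.id 𝕜 E - T) (z⁻¹ • ∑' n, (z⁻¹) ^ n • (T ^ n) x) = x := by
  have hshift : ∑' n, (z⁻¹) ^ n • (T ^ n) x = x + z⁻¹ • ∑' n, (z⁻¹) ^ n • (T ^ n) (T x) := by
    rw [hs.tsum_eq_zero_add, ← tsum_const_smul'']
    simp only [pow_zero, one_smul, one_apply_eq_self, pow_succ', mul_smul,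
      ← mul_apply_eq_comp, ← pow_succ]
  rw [sub_apply, smul_apply, ContinuousLinearMap.id_apply,
    smul_inv_smul₀ hz, map_smul, ← tsum_pow_smul_pow_apply_of_commute (Commute.refl T) hs]
  nth_rewrite 1 [hshift]
  abel

theorem smul_tsum_pow_smul_pow_apply_sub (hz : z ≠ 0)
    (hs : Summable fun n => (z⁻¹) ^ n • (T ^ n) x) :
    z⁻¹ • ∑' n, (z⁻¹) ^ n • (T ^ n) ((z • ContinuousLinearMap.id 𝕜 E - T) x) = x := by
  have hcomm : Commute (z • ContinuousLinearMap.id 𝕜 E - T) T :=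
    ((Commute.one_left T).smul_left z).sub_left (Commute.refl T)
  rw [tsum_pow_smul_pow_apply_of_commute hcomm hs, ← map_smul,
    sub_apply_smul_tsum_pow_smul_pow_apply hz hs]

end NeumannSeries

theorem exists_continuousLinearMap_tendsto_neumann_series {𝕜 E : Type*} [NontriviallyNormedField 𝕜]
    [AddCommGroup E] [Module 𝕜 E] [UniformSpace E] [IsUniformAddGroup E] [ContinuousSMul 𝕜 E]
    [T2Space E] [BarrelledSpace 𝕜 E] [PolynormableSpace 𝕜 E] {T : E →L[𝕜] E} {z : 𝕜}
    (hz : z ≠ 0) (hs : ∀ x, Summable fun n => (z⁻¹) ^ n • (T ^ n) x) :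
    ∃ R : E →L[𝕜] E,
      (∀ x : E, Tendsto (fun N : ℕ => z⁻¹ • ∑ n ∈ Finset.range N, (z⁻¹) ^ n • (T ^ n) x)
        atTop (nhds (R x))) ∧
      R.comp (z • ContinuousLinearMap.id 𝕜 E - T) = ContinuousLinearMap.id 𝕜 E ∧
      (z • ContinuousLinearMap.id 𝕜 E - T).comp R = ContinuousLinearMap.id 𝕜 E := by
  have hlim (x : E) : Tendsto (fun N : ℕ => z⁻¹ • ∑ n ∈ Finset.range N, (z⁻¹) ^ n • (T ^ n) x)
      atTop (nhds (z⁻¹ • ∑' n, (z⁻¹) ^ n • (T ^ n) x)) :=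
    (hs x).hasSum.tendsto_sum_nat.const_smul z⁻¹
  let R : E →L[𝕜] E :=
    continuousLinearMapOfTendsto (fun N : ℕ => z⁻¹ • ∑ n ∈ Finset.range N, (z⁻¹) ^ n • T ^ n)
      (f := fun x => z⁻¹ • ∑' n, (z⁻¹) ^ n • (T ^ n) x)
      (tendsto_pi_nhds.2 fun x => by simpa using hlim x)
  refine ⟨R, hlim, ?_, ?_⟩ <;> ext x
  · exact smul_tsum_pow_smul_pow_apply_sub hz (hs x)
  · exact sub_apply_smul_tsum_pow_smul_pow_apply hz (hs x)

theorem stmt_17 {E : Type*} [AddCommGroup E] [Module ℂ E] [UniformSpace E]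
    [IsUniformAddGroup E] [ContinuousSMul ℂ E] [CompleteSpace E]
    [TopologicalSpace.MetrizableSpace E]
    [Module ℝ E] [IsScalarTower ℝ ℂ E] [LocallyConvexSpace ℝ E]
    (T : E →L[ℂ] E)
    (hT : ∀ x : E, Tendsto (fun n : ℕ => (n : ℂ)⁻¹ • (T ^ n) x) atTop (nhds 0)) :
    (∀ z : ℂ, 1 < ‖z‖ → ∃ R : E →L[ℂ] E,
        (∀ x : E, Tendsto
          (fun N : ℕ => z⁻¹ • ∑ n ∈ Finset.range N, (z⁻¹) ^ n • (T ^ n) x)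
          atTop (nhds (R x))) ∧
        R.comp (z • ContinuousLinearMap.id ℂ E - T) = ContinuousLinearMap.id ℂ E ∧
        (z • ContinuousLinearMap.id ℂ E - T).comp R = ContinuousLinearMap.id ℂ E) ∧
      spectrum ℂ T ⊆ Metric.closedBall (0 : ℂ) 1 := by
  have : ContinuousSMul ℝ E := IsScalarTower.continuousSMul ℂ
  have : LocallyConvexSpace ℂ E := locallyConvexSpace_of_real
  -- makes `E` completely metrizable, hence Baire, hence barrelled
  have : (uniformity E).IsCountablyGenerated := by
    rw [uniformity_eq_comap_nhds_zero E]; infer_instance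
  have hinv (z : ℂ) (hz : 1 < ‖z‖) := exists_continuousLinearMap_tendsto_neumann_series
    (norm_pos_iff.1 (one_pos.trans hz))
    fun x => summable_pow_smul_of_tendsto_inv_smul (by simpa using inv_lt_one_of_one_lt₀ hz) (hT x)
  refine ⟨hinv, fun z hz => ?_⟩
  rw [mem_closedBall_zero_iff]
  by_contra! hz1
  obtain ⟨R, -, hRleft, hRright⟩ := hinv z hz1
  refine spectrum.mem_iff.1 hz ⟨⟨_, R, hRright, hRleft⟩, ?_⟩
  rw [Algebra.algebraMap_eq_smul_one]
  rfl
end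

section
/- Let E be a separable Fréchet space and T ∈ L(E) a power bounded operator admitting a fundamental increasing sequence of seminorms {q_j} with q_j(Tⁿx) ≤ q_j(x) for all j, n, x. Then the set of unimodular eigenvalues σ_p(T) ∩ {λ ∈ ℂ : |λ| = 1} is at most countable. -/
open Complex Set
open scoped Real

/-! If `x₁, x₂` are eigenvectors of `T` for distinct unimodular eigenvalues `l₁, l₂` and `μ = l₂ / l₁`,
some power `Tⁿ` maps `x₁ - x₂` to a unimodular multiple of `x₁ - μⁿ • x₂` with `‖1 - μⁿ‖ ≥ 1`;
as `Tⁿ` does not increase the seminorm `p`, this gives `p x₂ ≤ 2 p (x₁ - x₂)`. So small `p`-balls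
around such eigenvectors form a disjoint family of open sets, which is countable in a separable
space. Every eigenvector is seen by some `q j`, since the seminorms separate points. -/

lemma Real.exists_nat_cos_mul_nonpos {t : ℝ} (ht : t ≠ 0) (htπ : |t| ≤ π) :
    ∃ n : ℕ, Real.cos (n * t) ≤ 0 := by
  have hs : 0 < |t| := abs_pos.mpr ht
  -- the first multiple of `|t|` beyond `π / 2` overshoots it by at most `|t| ≤ π`
  refine ⟨⌈π / 2 / |t|⌉₊, ?_⟩
  rw [← Real.cos_abs, abs_mul, Nat.abs_cast]
  apply Real.cos_nonpos_of_pi_div_two_le_of_le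
  · exact (div_le_iff₀ hs).mp (Nat.le_ceil _)
  · have hceil := Nat.ceil_lt_add_one (div_nonneg (by positivity : (0 : ℝ) ≤ π / 2) hs.le)
    calc _ ≤ (π / 2 / |t| + 1) * |t| := by gcongr
      _ = π / 2 + |t| := by field_simp
      _ ≤ π + π / 2 := by linarith

lemma Complex.exists_one_le_norm_one_sub_pow {μ : ℂ} (hμ : ‖μ‖ = 1) (hμ1 : μ ≠ 1) :
    ∃ n : ℕ, 1 ≤ ‖1 - μ ^ n‖ := by
  set θ := arg μ
  have hμ_exp : μ = exp (θ * I) := by simpa [hμ] using (norm_mul_exp_arg_mul_I μ).symm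
  have harg : θ ≠ 0 := fun h => hμ1 (by rw [hμ_exp, h]; simp)
  obtain ⟨n, hn⟩ := Real.exists_nat_cos_mul_nonpos harg (abs_arg_le_pi μ)
  have hre : (μ ^ n).re = Real.cos (n * θ) := by
    rw [hμ_exp, ← exp_nat_mul, ← exp_ofReal_mul_I_re]
    push_cast
    ring_nf
  refine ⟨n, ?_⟩
  calc (1 : ℝ) ≤ (1 - μ ^ n).re := by simp only [sub_re, one_re, hre]; linarith
    _ ≤ ‖1 - μ ^ n‖ := re_le_norm _

section Eigenvectors

variable {E : Type*} [AddCommGroup E] [Module ℂ E] [TopologicalSpace E]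

lemma ContinuousLinearMap.pow_apply_of_apply_eq_smul {T : E →L[ℂ] E} {l : ℂ} {x : E}
    (hx : T x = l • x) (n : ℕ) : (T ^ n) x = l ^ n • x := by
  induction n with
  | zero => simp
  | succ n ih => rw [pow_succ', mul_apply_eq_comp, ih, map_smul, hx, smul_smul, ← pow_succ]

theorem Seminorm.apply_le_two_mul_apply_sub_of_eigenvectors (p : Seminorm ℂ E) {T : E →L[ℂ] E}
    (hT : ∀ (n : ℕ) (x : E), p ((T ^ n) x) ≤ p x) {l₁ l₂ : ℂ} (h₁ : ‖l₁‖ = 1) (h₂ : ‖l₂‖ = 1)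
    (hne : l₁ ≠ l₂) {x₁ x₂ : E} (hx₁ : T x₁ = l₁ • x₁) (hx₂ : T x₂ = l₂ • x₂) :
    p x₂ ≤ 2 * p (x₁ - x₂) := by
  have hl₁ : l₁ ≠ 0 := norm_ne_zero_iff.mp (by rw [h₁]; exact one_ne_zero)
  set μ := l₂ / l₁
  obtain ⟨n, hn⟩ := exists_one_le_norm_one_sub_pow (μ := μ) (by rw [norm_div, h₁, h₂, div_one])
    fun h => hne ((div_eq_one_iff_eq hl₁).mp h).symm
  have hrot : p (x₁ - μ ^ n • x₂) ≤ p (x₁ - x₂) := by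
    have hTn : (T ^ n) (x₁ - x₂) = l₁ ^ n • (x₁ - μ ^ n • x₂) := by
      rw [map_sub, T.pow_apply_of_apply_eq_smul hx₁, T.pow_apply_of_apply_eq_smul hx₂, smul_sub,
        smul_smul, ← mul_pow, mul_div_cancel₀ _ hl₁]
    simpa [hTn, map_smul_eq_mul, h₁] using hT n (x₁ - x₂)
  calc p x₂ ≤ ‖1 - μ ^ n‖ * p x₂ := le_mul_of_one_le_left (apply_nonneg _ _) hn
    _ = p ((x₂ - x₁) + (x₁ - μ ^ n • x₂)) := by
      rw [← map_smul_eq_mul, sub_smul, one_smul, sub_add_sub_cancel]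
    _ ≤ p (x₂ - x₁) + p (x₁ - μ ^ n • x₂) := map_add_le_add _ _ _
    _ ≤ 2 * p (x₁ - x₂) := by rw [map_sub_rev]; linarith

theorem Seminorm.countable_unimodular_eigenvalues [ContinuousSub E]
    [TopologicalSpace.SeparableSpace E] (p : Seminorm ℂ E) (hp : Continuous p) (T : E →L[ℂ] E)
    (hT : ∀ (n : ℕ) (x : E), p ((T ^ n) x) ≤ p x) :
    {l : ℂ | ‖l‖ = 1 ∧ ∃ x : E, p x ≠ 0 ∧ T x = l • x}.Countable := by
  let U : ℂ → Set E := fun l => ⋃ y ∈ {y | p y ≠ 0 ∧ T y = l • y}, {z | p (y - z) < p y / 4}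
  refine PairwiseDisjoint.countable_of_isOpen (s := U) ?_ ?_ ?_
  · rintro l₁ ⟨h₁, -⟩ l₂ ⟨h₂, -⟩ hne
    refine disjoint_left.mpr ?_
    simp only [U, mem_iUnion, mem_ofPred_eq, exists_prop]
    rintro z ⟨y₁, ⟨-, hy₁⟩, hz₁⟩ ⟨y₂, ⟨-, hy₂⟩, hz₂⟩
    have h₂₁ := p.apply_le_two_mul_apply_sub_of_eigenvectors hT h₁ h₂ hne hy₁ hy₂
    have h₁₂ := p.apply_le_two_mul_apply_sub_of_eigenvectors hT h₂ h₁ hne.symm hy₂ hy₁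
    have htri : p (y₁ - y₂) ≤ p (y₁ - z) + p (y₂ - z) := by
      simpa [map_sub_rev p y₂ z] using map_sub_le_add p (y₁ - z) (y₂ - z)
    rw [map_sub_rev] at h₁₂
    linarith
  · exact fun l _ => isOpen_biUnion fun y _ =>
      isOpen_lt (hp.comp (continuous_const.sub continuous_id)) continuous_const
  · rintro l ⟨-, y, hy0, hy⟩
    exact ⟨y, mem_biUnion ⟨hy0, hy⟩ (by simpa using (apply_nonneg p y).lt_of_ne' hy0)⟩

end Eigenvectors

theorem stmt_19_general {E : Type*} [AddCommGroup E] [Module ℂ E] [UniformSpace E]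
    [TopologicalSpace.MetrizableSpace E] [TopologicalSpace.SeparableSpace E]
    (q : ℕ → Seminorm ℂ E) (hq : WithSeminorms q)
    (T : E →L[ℂ] E)
    (hT : ∀ (j n : ℕ) (x : E), q j ((T ^ n) x) ≤ q j x) :
    {lam : ℂ | ‖lam‖ = 1 ∧ ∃ x : E, x ≠ 0 ∧ T x = lam • x}.Countable := by
  have := hq.topologicalAddGroup
  refine (countable_iUnion fun j =>
    (q j).countable_unimodular_eigenvalues (hq.continuous_seminorm j) T (hT j)).mono ?_
  rintro l ⟨hl, x, hx0, hx⟩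
  obtain ⟨j, hj⟩ := hq.separating_of_T1 x hx0
  exact mem_iUnion.mpr ⟨j, hl, x, hj, hx⟩

theorem stmt_19 {E : Type*} [AddCommGroup E] [Module ℂ E] [UniformSpace E]
    [IsUniformAddGroup E] [ContinuousSMul ℂ E] [CompleteSpace E]
    [TopologicalSpace.MetrizableSpace E] [TopologicalSpace.SeparableSpace E]
    (q : ℕ → Seminorm ℂ E) (hq : WithSeminorms q) (hmono : Monotone q)
    (T : E →L[ℂ] E)
    (hT : ∀ (j n : ℕ) (x : E), q j ((T ^ n) x) ≤ q j x) :
    {lam : ℂ | ‖lam‖ = 1 ∧ ∃ x : E, x ≠ 0 ∧ T x = lam • x}.Countable :=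
  stmt_19_general q hq T hT
end
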